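/- Let ρ : ℝ → ℝ be continuous, even, with ρ(0) = 0, non-decreasing on [0,∞), and strictly increasing on a neighbourhood [0, δ) of 0 (in the sense ρ(u) < ρ(v) whenever 0 ≤ u < v < δ). Let ε have a density g that is even, non-increasing in |t|, and strictly decreasing in |t| on a neighbourhood of 0. Then for Y = m + σ·ε with σ > 0, the function a ↦ E[ρ((Y − a)/σ)] attains its unique minimum at a = m. -/

import Mathlib

/-!
Write `c = (a - m) / σ`, so that the claim reads `∫ ρ(u) g(u) du < ∫ ρ(u - c) g(u) du` for
`c ≠ 0`. Since `u ↦ c - u` preserves Lebesgue measure, twice the difference of the two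
integrals is the integral of `h(u) + h(c - u)` with `h(u) = (ρ(u - c) - ρ(u)) g(u)`, and by
evenness this symmetrised integrand equals `(ρ(u) - ρ(u - c)) (g(u - c) - g(u))`. As `ρ`
increases and `g` decreases in `|·|`, both factors have the same sign, and near `u = c` they are
strictly positive, by the strict monotonicity of `ρ` and `g` close to `0`.
-/

open MeasureTheory

section AbsMonotone

variable {φ : ℝ → ℝ} {δ : ℝ}

lemma apply_eq_apply_abs_of_even (hφ : ∀ u, φ (-u) = φ u) (x : ℝ) : φ x = φ |x| := by
  rcases abs_choice x with h | h <;> rw [h]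
  rw [hφ]

lemma apply_le_apply_of_abs_le_of_even (hφ : ∀ u, φ (-u) = φ u)
    (hmono : ∀ u v : ℝ, 0 ≤ u → u ≤ v → φ u ≤ φ v) {x y : ℝ} (hxy : |x| ≤ |y|) :
    φ x ≤ φ y := by
  rw [apply_eq_apply_abs_of_even hφ x, apply_eq_apply_abs_of_even hφ y]
  exact hmono _ _ (abs_nonneg x) hxy

lemma apply_lt_apply_of_abs_lt_of_even (hφ : ∀ u, φ (-u) = φ u)
    (hstrict : ∀ u v : ℝ, 0 ≤ u → u < v → v < δ → φ u < φ v) {x y : ℝ} (hxy : |x| < |y|)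
    (hy : |y| < δ) : φ x < φ y := by
  rw [apply_eq_apply_abs_of_even hφ x, apply_eq_apply_abs_of_even hφ y]
  exact hstrict _ _ (abs_nonneg x) hxy hy

lemma apply_lt_apply_of_abs_lt (hmono : ∀ x y : ℝ, |x| ≤ |y| → φ x ≤ φ y)
    (hstrict : ∀ x y : ℝ, |x| < |y| → |y| < δ → φ x < φ y) {x y : ℝ} (hxy : |x| < |y|)
    (hx : |x| < δ) : φ x < φ y := by
  set p := min |y| ((|x| + δ) / 2)
  have hp : |p| = p := abs_of_nonneg (le_min (abs_nonneg y) (by linarith [abs_nonneg x]))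
  calc φ x < φ p := hstrict x p (by rw [hp]; exact lt_min hxy (by linarith))
        (by rw [hp]; exact (min_le_right _ _).trans_lt (by linarith))
    _ ≤ φ y := hmono p y (by rw [hp]; exact min_le_left _ _)

lemma apply_eq_apply_of_abs_eq_of_abs_antitone (hφ : ∀ s t : ℝ, |s| ≤ |t| → φ t ≤ φ s)
    {x y : ℝ} (hxy : |x| = |y|) : φ x = φ y :=
  le_antisymm (hφ y x hxy.ge) (hφ x y hxy.le)

end AbsMonotone

section Symmetrization

variable {ρ g : ℝ → ℝ} {δ δ' : ℝ}

lemma mul_sub_sub_nonneg_of_abs_mono_of_abs_anti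
    (hρle : ∀ x y : ℝ, |x| ≤ |y| → ρ x ≤ ρ y) (hg : ∀ s t : ℝ, |s| ≤ |t| → g t ≤ g s)
    (x y : ℝ) : 0 ≤ (ρ x - ρ y) * (g y - g x) := by
  rcases le_total |x| |y| with h | h
  · exact mul_nonneg_of_nonpos_of_nonpos (sub_nonpos.2 (hρle x y h)) (sub_nonpos.2 (hg x y h))
  · exact mul_nonneg (sub_nonneg.2 (hρle y x h)) (sub_nonneg.2 (hg y x h))

lemma mul_sub_sub_pos_of_abs_lt
    (hρle : ∀ x y : ℝ, |x| ≤ |y| → ρ x ≤ ρ y)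
    (hρstrict : ∀ x y : ℝ, |x| < |y| → |y| < δ → ρ x < ρ y)
    (hg : ∀ s t : ℝ, |s| ≤ |t| → g t ≤ g s)
    (hgstrict : ∀ s t : ℝ, |s| < |t| → |t| < δ' → g t < g s)
    {x y : ℝ} (hyx : |y| < |x|) (hyδ : |y| < δ) (hyδ' : |y| < δ') :
    0 < (ρ x - ρ y) * (g y - g x) := by
  have hρyx : ρ y < ρ x := apply_lt_apply_of_abs_lt hρle hρstrict hyx hyδ
  have hgxy : -g y < -g x :=
    apply_lt_apply_of_abs_lt (φ := fun t => -g t) (fun s t h => neg_le_neg (hg s t h))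
      (fun s t h ht => neg_lt_neg (hgstrict s t h ht)) hyx hyδ'
  exact mul_pos (sub_pos.2 hρyx) (by linarith)

end Symmetrization

lemma integral_add_comp_sub_left {h : ℝ → ℝ} (hh : Integrable h) (c : ℝ) :
    ∫ u, (h u + h (c - u)) = 2 * ∫ u, h u := by
  rw [integral_add hh ((integrable_comp_sub_left h c).2 hh), integral_sub_left_eq_self h volume c]
  ring

lemma integral_pos_of_pos_on_Ioo {f : ℝ → ℝ} (hf : 0 ≤ f) (hfi : Integrable f) {a b : ℝ}
    (hab : a < b) (hpos : ∀ u ∈ Set.Ioo a b, 0 < f u) : 0 < ∫ u, f u := by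
  rw [integral_pos_iff_support_of_nonneg hf hfi]
  calc (0 : ENNReal) < volume (Set.Ioo a b) := by simpa [Real.volume_Ioo] using hab
    _ ≤ volume (Function.support f) := measure_mono fun u hu => (hpos u hu).ne'

lemma integral_lt_integral_comp_sub (ρ g : ℝ → ℝ)
    (hρeven : ∀ u, ρ (-u) = ρ u) (hρmono : ∀ u v : ℝ, 0 ≤ u → u ≤ v → ρ u ≤ ρ v)
    (δ : ℝ) (hδ : 0 < δ) (hρstrict : ∀ u v : ℝ, 0 ≤ u → u < v → v < δ → ρ u < ρ v)
    (hgmono : ∀ s t : ℝ, |s| ≤ |t| → g t ≤ g s)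
    (δ' : ℝ) (hδ' : 0 < δ') (hgstrict : ∀ s t : ℝ, |s| < |t| → |t| < δ' → g t < g s)
    {c : ℝ} (hc : c ≠ 0)
    (h₀ : Integrable (fun u => ρ u * g u)) (h₁ : Integrable (fun u => ρ (u - c) * g u)) :
    ∫ u, ρ u * g u < ∫ u, ρ (u - c) * g u := by
  have hρle (x y : ℝ) (h : |x| ≤ |y|) : ρ x ≤ ρ y :=
    apply_le_apply_of_abs_le_of_even hρeven hρmono h
  have hρlt (x y : ℝ) (h : |x| < |y|) (hy : |y| < δ) : ρ x < ρ y :=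
    apply_lt_apply_of_abs_lt_of_even hρeven hρstrict h hy
  set h : ℝ → ℝ := fun u => ρ (u - c) * g u - ρ u * g u
  have hh : Integrable h := h₁.sub h₀
  have hsymm : ∀ u, h u + h (c - u) = (ρ u - ρ (u - c)) * (g (u - c) - g u) := by
    intro u
    have hρ₁ : ρ (c - u - c) = ρ u := by rw [sub_sub_cancel_left, hρeven]
    have hρ₂ : ρ (c - u) = ρ (u - c) := by rw [← neg_sub, hρeven]
    have hg₁ : g (c - u) = g (u - c) :=
      apply_eq_apply_of_abs_eq_of_abs_antitone hgmono (abs_sub_comm c u)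
    simp only [h, hρ₁, hρ₂, hg₁]
    ring
  set r := min (min δ δ') (|c| / 2)
  have hr : 0 < r := lt_min (lt_min hδ hδ') (by positivity)
  have hpos : 0 < ∫ u, (h u + h (c - u)) := by
    refine integral_pos_of_pos_on_Ioo (fun u => (hsymm u).symm ▸
        mul_sub_sub_nonneg_of_abs_mono_of_abs_anti hρle hgmono u (u - c))
      (hh.add ((integrable_comp_sub_left h c).2 hh))
      (show c - r < c + r by linarith) fun u hu => ?_
    have hur : |u - c| < r := abs_sub_lt_iff.2 ⟨by linarith [hu.2], by linarith [hu.1]⟩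
    have hrc : r ≤ |c| / 2 := min_le_right _ _
    have huc : |u - c| < |u| := by
      linarith [abs_sub_abs_le_abs_sub c u, abs_sub_comm c u]
    rw [hsymm]
    exact mul_sub_sub_pos_of_abs_lt hρle hρlt hgmono hgstrict huc
      (hur.trans_le ((min_le_left _ _).trans (min_le_left _ _)))
      (hur.trans_le ((min_le_left _ _).trans (min_le_right _ _)))
  have hdiff : ∫ u, h u = (∫ u, ρ (u - c) * g u) - ∫ u, ρ u * g u := integral_sub h₁ h₀
  rw [integral_add_comp_sub_left hh, hdiff] at hpos
  linarith

theorem stmt_1_general (ρ : ℝ → ℝ) (g : ℝ → ℝ) (m σ : ℝ) (hσ : 0 < σ)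
    (hρeven : ∀ u, ρ (-u) = ρ u)
    (hρmono : ∀ u v : ℝ, 0 ≤ u → u ≤ v → ρ u ≤ ρ v)
    (δ : ℝ) (hδ : 0 < δ)
    (hρstrict : ∀ u v : ℝ, 0 ≤ u → u < v → v < δ → ρ u < ρ v)
    (hgmono : ∀ s t : ℝ, |s| ≤ |t| → g t ≤ g s)
    (δ' : ℝ) (hδ' : 0 < δ')
    (hgstrict : ∀ s t : ℝ, |s| < |t| → |t| < δ' → g t < g s)
    (hint : ∀ a : ℝ, Integrable (fun u => ρ ((m + σ * u - a) / σ) * g u)) :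
    ∀ a : ℝ, a ≠ m →
      (∫ u, ρ ((m + σ * u - m) / σ) * g u) < ∫ u, ρ ((m + σ * u - a) / σ) * g u := by
  have hstd (a : ℝ) : (fun u => ρ ((m + σ * u - a) / σ) * g u)
      = fun u => ρ (u - (a - m) / σ) * g u := by
    funext u
    congr 2
    field_simp
    ring
  intro a ha
  have hc : (a - m) / σ ≠ 0 := div_ne_zero (sub_ne_zero.2 ha) hσ.ne'
  have h₀ := hint m
  have h₁ := hint a
  rw [hstd, sub_self, zero_div] at h₀ ⊢
  simp only [sub_zero] at h₀ ⊢
  rw [hstd] at h₁ ⊢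
  exact integral_lt_integral_comp_sub ρ g hρeven hρmono δ hδ hρstrict hgmono δ' hδ' hgstrict
    hc h₀ h₁

/-- For a ρ-function ρ (continuous, even, ρ(0)=0, non-decreasing on [0,∞), strictly
increasing near 0) and an error ε with an even density g that is non-increasing in |t| and
strictly decreasing in |t| near 0, the function a ↦ E[ρ((Y − a)/σ)], with Y = m + σε,
attains its unique minimum at a = m. -/
theorem stmt_1 (ρ : ℝ → ℝ) (g : ℝ → ℝ) (m σ : ℝ) (hσ : 0 < σ)
    (hρcont : Continuous ρ) (hρeven : ∀ u, ρ (-u) = ρ u) (hρ0 : ρ 0 = 0)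
    (hρmono : ∀ u v : ℝ, 0 ≤ u → u ≤ v → ρ u ≤ ρ v)
    (δ : ℝ) (hδ : 0 < δ)
    (hρstrict : ∀ u v : ℝ, 0 ≤ u → u < v → v < δ → ρ u < ρ v)
    (hg : ∀ t, 0 ≤ g t) (hgmeas : Measurable g)
    (hgdens : ∫ t, g t = 1)
    (hgeven : ∀ t, g (-t) = g t)
    (hgmono : ∀ s t : ℝ, |s| ≤ |t| → g t ≤ g s)
    (δ' : ℝ) (hδ' : 0 < δ')
    (hgstrict : ∀ s t : ℝ, |s| < |t| → |t| < δ' → g t < g s)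
    (hint : ∀ a : ℝ, Integrable (fun u => ρ ((m + σ * u - a) / σ) * g u)) :
    ∀ a : ℝ, a ≠ m →
      (∫ u, ρ ((m + σ * u - m) / σ) * g u) < ∫ u, ρ ((m + σ * u - a) / σ) * g u :=
  stmt_1_general ρ g m σ hσ hρeven hρmono δ hδ hρstrict hgmono δ' hδ' hgstrict hint
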